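/- arXiv:1306.0834 — 8 statements merged into one kernel-verified Lean document; each statement's English description precedes it below -/
import Mathlib

section
/- If H is a cancellative monoid with a non-unit element a whose set of lengths contains two distinct integers k < ℓ with k > 1, then for every n ∈ ℕ the set of lengths of aⁿ contains {kn + ν(ℓ−k) : ν ∈ [0,n]}; in particular sets of lengths in H become arbitrarily large. -/
/-- The set of lengths of `a`: all `n` such that `a = ε·u₁⋯u_n` for a unit `ε` and
atoms (irreducibles) `u₁, …, u_n`. -/
def LengthSet {M : Type*} [Monoid M] (a : M) : Set ℕ :=
  {n | ∃ (ε : Mˣ) (L : List M), L.length = n ∧ (∀ x ∈ L, Irreducible x) ∧ a = ε * L.prod}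

/-! Lengths add under multiplication, so `a^(n-ν) * a^ν` has length `(n - ν)k + νℓ`.
In a noncommutative monoid the unit of the second factorization is moved to the front
by conjugating the atoms of the first one, and conjugates of atoms are atoms. -/

section LengthSet

variable {M : Type*} [Monoid M]

lemma List.prod_map_conj_units (u : Mˣ) (L : List M) :
    (L.map fun x => (↑u⁻¹ * x * u : M)).prod = ↑u⁻¹ * L.prod * u := by
  induction L with
  | nil => simp
  | cons x L ih =>
    rw [List.map_cons, List.prod_cons, List.prod_cons, ih]
    simp only [mul_assoc, Units.mul_inv_cancel_left]

lemma zero_mem_lengthSet_one : 0 ∈ LengthSet (1 : M) :=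
  ⟨1, [], rfl, by simp, by simp⟩

lemma add_mem_lengthSet_mul {a b : M} {m n : ℕ} (hm : m ∈ LengthSet a)
    (hn : n ∈ LengthSet b) : m + n ∈ LengthSet (a * b) := by
  obtain ⟨ε, L, rfl, hL, rfl⟩ := hm
  obtain ⟨δ, K, rfl, hK, rfl⟩ := hn
  refine ⟨ε * δ, L.map (fun x : M => ↑δ⁻¹ * x * δ) ++ K, by simp, ?_, ?_⟩
  · simp only [List.mem_append, List.mem_map]
    rintro _ (⟨x, hx, rfl⟩ | hy)
    · rw [irreducible_mul_units, irreducible_units_mul]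
      exact hL x hx
    · exact hK _ hy
  · rw [List.prod_append, List.prod_map_conj_units]
    simp only [Units.val_mul, mul_assoc, Units.mul_inv_cancel_left]

lemma mul_mem_lengthSet_pow {a : M} {m : ℕ} (hm : m ∈ LengthSet a) (n : ℕ) :
    n * m ∈ LengthSet (a ^ n) := by
  induction n with
  | zero => simpa using zero_mem_lengthSet_one
  | succ n ih => simpa [pow_succ, add_mul] using add_mem_lengthSet_mul ih hm

end LengthSet

theorem stmt3_general {H : Type*} [CancelMonoid H] (a : H)
    (k l : ℕ) (hkl : k < l)
    (hkmem : k ∈ LengthSet a) (hlmem : l ∈ LengthSet a) :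
    ∀ n : ℕ, 0 < n → ∀ ν : ℕ, ν ≤ n → k * n + ν * (l - k) ∈ LengthSet (a ^ n) := by
  intro n _ ν hν
  have hlen : k * n + ν * (l - k) = (n - ν) * k + ν * l := by
    obtain ⟨d, rfl⟩ := Nat.exists_eq_add_of_le hkl.le
    obtain ⟨c, rfl⟩ := Nat.exists_eq_add_of_le hν
    simp only [Nat.add_sub_cancel_left]
    ring
  rw [hlen, ← Nat.sub_add_cancel hν, pow_add, Nat.add_sub_cancel]
  exact add_mem_lengthSet_mul (mul_mem_lengthSet_pow hkmem _) (mul_mem_lengthSet_pow hlmem _)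

/-- If a non-unit `a` has two lengths `1 < k < ℓ`, then for every `n ≥ 1` the set of
lengths of `aⁿ` contains `kn + ν(ℓ - k)` for all `0 ≤ ν ≤ n`; in particular sets of
lengths become arbitrarily large. -/
theorem stmt3 {H : Type*} [CancelMonoid H] (a : H) (ha : ¬ IsUnit a)
    (k l : ℕ) (hk : 1 < k) (hkl : k < l)
    (hkmem : k ∈ LengthSet a) (hlmem : l ∈ LengthSet a) :
    ∀ n : ℕ, 0 < n → ∀ ν : ℕ, ν ≤ n → k * n + ν * (l - k) ∈ LengthSet (a ^ n) :=
  stmt3_general a k l hkl hkmem hlmem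
end

section
/- In a lattice-ordered group U, an element p with p ≤ e (e the identity) is maximal in the set of integral elements different from e if and only if p is a prime element of the monoid U₊ = {x ∈ U : x ≤ e} (with divisibility given by the reverse order), and this holds if and only if p is an atom of U₊. -/
/-- In a lattice-ordered group `U`, for an integral element `p ≤ 1` the following are
equivalent: `p` is maximal among integral elements `≠ 1`; `p` is a prime element of the
monoid `U₊ = {x : x ≤ 1}` (where `d` divides `a` iff `a ≤ d`); `p` is an atom of `U₊`. -/
theorem stmt4 {U : Type*} [Lattice U] [Group U]
    [CovariantClass U U (· * ·) (· ≤ ·)]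
    [CovariantClass U U (Function.swap (· * ·)) (· ≤ ·)]
    (p : U) (hp : p ≤ 1) :
    ((p ≠ 1 ∧ ∀ x : U, x ≤ 1 → x ≠ 1 → p ≤ x → x = p) ↔
      (p ≠ 1 ∧ ∀ a b : U, a ≤ 1 → b ≤ 1 → a * b ≤ p → a ≤ p ∨ b ≤ p)) ∧
    ((p ≠ 1 ∧ ∀ a b : U, a ≤ 1 → b ≤ 1 → a * b ≤ p → a ≤ p ∨ b ≤ p) ↔
      (p ≠ 1 ∧ ∀ a b : U, a ≤ 1 → b ≤ 1 → p = a * b → a = 1 ∨ b = 1)) := by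
  have key : ∀ a b : U, b ≤ 1 → a * b ≤ p → a ⊔ p = 1 → b ≤ p := by
    intro a b hb hab hx
    calc b = (a ⊔ p) * b := by rw [hx, one_mul]
      _ = a * b ⊔ p * b := sup_mul a p b
      _ ≤ p := sup_le hab (by calc p * b ≤ p * 1 := mul_le_mul_right hb p
                                _ = p := mul_one p)
  constructor
  · constructor
    · rintro ⟨hne, hmax⟩
      refine ⟨hne, fun a b ha hb hab => ?_⟩
      by_cases h : a ≤ p
      · exact Or.inl h
      · refine Or.inr (key a b hb hab ?_)
        by_contra hx1
        have heq := hmax (a ⊔ p) (sup_le ha hp) hx1 le_sup_right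
        exact h (heq ▸ le_sup_left)
    · rintro ⟨hne, hpr⟩
      refine ⟨hne, fun x hx hx1 hpx => ?_⟩
      have hb : x⁻¹ * p ≤ 1 := by
        calc x⁻¹ * p ≤ x⁻¹ * x := mul_le_mul_right hpx x⁻¹
          _ = 1 := inv_mul_cancel x
      have hab : x * (x⁻¹ * p) ≤ p := by rw [mul_inv_cancel_left]
      rcases hpr x (x⁻¹ * p) hx hb hab with h | h
      · exact le_antisymm h hpx
      · exfalso
        have h1 : x⁻¹ ≤ 1 := by
          have := mul_le_mul_left h p⁻¹
          rwa [mul_inv_cancel_right, mul_inv_cancel] at this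
        exact hx1 (le_antisymm hx (by rwa [inv_le_one'] at h1))
  · constructor
    · rintro ⟨hne, hpr⟩
      refine ⟨hne, fun a b ha hb hpe => ?_⟩
      rcases hpr a b ha hb hpe.ge with h | h
      · right
        have : a ≤ a * b := hpe ▸ h
        exact le_antisymm hb (le_of_mul_le_mul_left' (by rwa [mul_one]))
      · left
        have : b ≤ a * b := hpe ▸ h
        exact le_antisymm ha (le_of_mul_le_mul_right' (by rwa [one_mul]))
    · rintro ⟨hne, hatom⟩
      refine ⟨hne, fun a b ha hb hab => ?_⟩
      by_cases h : a ≤ p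
      · exact Or.inl h
      · have hc1 : a ⊔ p ≤ 1 := sup_le ha hp
        have hd : (a ⊔ p)⁻¹ * p ≤ 1 := by
          calc (a ⊔ p)⁻¹ * p ≤ (a ⊔ p)⁻¹ * (a ⊔ p) := mul_le_mul_right le_sup_right _
            _ = 1 := inv_mul_cancel _
        have heq : p = (a ⊔ p) * ((a ⊔ p)⁻¹ * p) := by rw [mul_inv_cancel_left]
        rcases hatom _ _ hc1 hd heq with h1 | h1
        · exact Or.inr (key a b hb hab h1)
        · exfalso
          apply h
          have h2 : a ⊔ p = p := inv_mul_eq_one.mp h1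
          exact h2 ▸ le_sup_left
end

section
/- Let U be a conditionally complete lattice-ordered group satisfying the ascending chain condition on integral elements. Then U is commutative, U₊ is a free abelian monoid on its set of atoms, and U is the free abelian group on the same basis. Moreover, for a, b ∈ U₊, gcd(a,b) = a ∨ b and lcm(a,b) = a ∧ b. -/
/-!
The ACC makes `U₊`, ordered by divisibility (the reverse of `≤`), well founded, so every integral
element is a product of atoms. Two distinct atoms `p, q` satisfy `p ⊔ q = 1`, and in an l-group
`x ⊔ y = 1` forces `x * y = y ⊓ x = y * x`; hence atoms commute, so does `U₊`, and so does `U`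
since every element is `x * y⁻¹` with `x, y` integral. An atom `q` is coprime (`q ⊔ x = 1`) to every
product of the other atoms, while it lies above every product in which it occurs; therefore
`∏ p ^ f p ≤ 1` forces `f ≥ 0`, which makes the evaluation map from `atoms →₀ ℤ` injective and
identifies its nonnegative part with `U₊`. Finally, in `U₊` the element `d` divides `a` iff
`a ≤ d`, so gcd and lcm are the lattice operations.
-/

/-- An atom of the monoid of integral elements `U₊ = {x : x ≤ 1}` of an ordered group. -/
def IsIntegralAtom {U : Type*} [Group U] [PartialOrder U] (p : U) : Prop :=
  p ≤ 1 ∧ p ≠ 1 ∧ ∀ a b : U, a ≤ 1 → b ≤ 1 → p = a * b → a = 1 ∨ b = 1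

theorem wellFoundedGT_Iic_of_acc {α : Type*} [PartialOrder α] {t : α}
    (hacc : ∀ f : ℕ → α, (∀ n, f n ≤ t) → Monotone f → ∃ N, ∀ n, N ≤ n → f n = f N) :
    WellFoundedGT (Set.Iic t) := by
  refine wellFoundedGT_iff_monotone_chain_condition.2 fun a => ?_
  obtain ⟨N, hN⟩ := hacc (fun n => a n) (fun n => (a n).2) fun m n h => a.mono h
  exact ⟨N, fun n hn => Subtype.ext (hN n hn).symm⟩

theorem exists_le_one_eq_mul_iff {G : Type*} [Group G] [Preorder G] [MulLeftMono G] {a d : G} :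
    (∃ c, c ≤ 1 ∧ a = d * c) ↔ a ≤ d := by
  constructor
  · rintro ⟨c, hc, rfl⟩
    exact mul_le_of_le_one_right' hc
  · exact fun h => ⟨d⁻¹ * a, inv_mul_le_one_iff.2 h, (mul_inv_cancel_left d a).symm⟩

theorem zpow_le_one_of_le_one {G : Type*} [Group G] [Preorder G] [MulLeftMono G] {x : G}
    (hx : x ≤ 1) {n : ℤ} (hn : 0 ≤ n) : x ^ n ≤ 1 := by
  lift n to ℕ using hn
  rw [zpow_natCast]
  exact pow_le_one' hx n

theorem IsIntegralAtom.eq_one_or_eq_of_le {G : Type*} [Group G] [PartialOrder G] [MulLeftMono G]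
    {p x : G} (hp : IsIntegralAtom p) (hpx : p ≤ x) (hx : x ≤ 1) : x = 1 ∨ x = p := by
  refine (hp.2.2 x (x⁻¹ * p) hx (inv_mul_le_one_iff.2 hpx) (mul_inv_cancel_left x p).symm).imp_right
    fun h => inv_mul_eq_one.1 h

section LatticeOrderedGroup

variable {U : Type*} [Lattice U] [Group U] [MulLeftMono U]

theorem IsIntegralAtom.sup_eq_one {p q : U} (hp : IsIntegralAtom p) (hq : IsIntegralAtom q)
    (hne : p ≠ q) : p ⊔ q = 1 := by
  refine (hp.eq_one_or_eq_of_le le_sup_left (sup_le hp.1 hq.1)).resolve_right fun h => ?_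
  rcases hq.eq_one_or_eq_of_le (h ▸ le_sup_right) hp.1 with h1 | h1
  · exact hp.2.1 h1
  · exact hne h1

theorem exists_le_one_eq_mul_inv (a : U) : ∃ x y : U, x ≤ 1 ∧ y ≤ 1 ∧ a = x * y⁻¹ :=
  ⟨a ⊓ 1, a⁻¹ * (a ⊓ 1), inf_le_right,
    (mul_le_mul_iff_left a⁻¹).2 inf_le_left |>.trans_eq (inv_mul_cancel a),
    by rw [mul_inv_rev, inv_inv, mul_inv_cancel_left]⟩

variable [MulRightMono U]

theorem mul_eq_inf_of_sup_eq_one {a b : U} (h : a ⊔ b = 1) : a * b = b ⊓ a := by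
  have : a * (a ⊔ b)⁻¹ * b = b ⊓ a := by rw [inv_sup, mul_inf, inf_mul]; simp
  rwa [h, inv_one, mul_one] at this

theorem commute_of_sup_eq_one {a b : U} (h : a ⊔ b = 1) : Commute a b := by
  rw [Commute, SemiconjBy, mul_eq_inf_of_sup_eq_one h,
    mul_eq_inf_of_sup_eq_one (sup_comm b a ▸ h), inf_comm]

theorem IsIntegralAtom.commute {p q : U} (hp : IsIntegralAtom p) (hq : IsIntegralAtom q) :
    Commute p q := by
  rcases eq_or_ne p q with rfl | hne
  · exact Commute.refl p
  · exact commute_of_sup_eq_one (hp.sup_eq_one hq hne)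

theorem sup_mul_eq_one {a b c : U} (hb : a ⊔ b = 1) (hc : a ⊔ c = 1) : a ⊔ b * c = 1 := by
  have ha : a ≤ 1 := le_sup_left.trans hb.le
  have hb1 : b ≤ 1 := le_sup_right.trans hb.le
  have hc1 : c ≤ 1 := le_sup_right.trans hc.le
  refine le_antisymm (sup_le ha (mul_le_one' hb1 hc1)) ?_
  calc (1 : U) = (a ⊔ b) * (a ⊔ c) := by rw [hb, hc, mul_one]
    _ = a * a ⊔ a * c ⊔ (b * a ⊔ b * c) := by rw [sup_mul, mul_sup, mul_sup]
    _ ≤ a ⊔ b * c := by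
      refine sup_le (sup_le ?_ ?_) (sup_le ?_ le_sup_right) <;> refine le_sup_of_le_left ?_
      exacts [mul_le_of_le_one_right' ha, mul_le_of_le_one_right' hc1, mul_le_of_le_one_left' hb1]

theorem sup_pow_eq_one {a b : U} (h : a ⊔ b = 1) (n : ℕ) : a ⊔ b ^ n = 1 := by
  induction n with
  | zero => rw [pow_zero]; exact sup_eq_right.2 (le_sup_left.trans h.le)
  | succ n ih => rw [pow_succ]; exact sup_mul_eq_one ih h

theorem mem_closure_isIntegralAtom (hwf : WellFoundedGT (Set.Iic (1 : U))) {a : U} (ha : a ≤ 1) :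
    a ∈ Submonoid.closure {p : U | IsIntegralAtom p} := by
  lift a to Set.Iic (1 : U) using ha
  induction a using WellFoundedGT.induction with
  | _ a ih =>
    by_cases h1 : (a : U) = 1
    · rw [h1]
      exact Submonoid.one_mem _
    by_cases hatom : IsIntegralAtom (a : U)
    · exact Submonoid.subset_closure hatom
    obtain ⟨b, c, hb, hc, habc, hb1, hc1⟩ : ∃ b c : U, b ≤ 1 ∧ c ≤ 1 ∧ (a : U) = b * c ∧
        b ≠ 1 ∧ c ≠ 1 := by
      have ha1 : (a : U) ≤ 1 := a.2
      simpa [IsIntegralAtom, ha1, h1, and_assoc] using hatom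
    have hab : (a : U) < b := lt_of_le_of_ne (habc ▸ mul_le_of_le_one_right' hc)
      fun h => hc1 (mul_eq_left.1 (h ▸ habc).symm)
    have hac : (a : U) < c := lt_of_le_of_ne (habc ▸ mul_le_of_le_one_left' hb)
      fun h => hb1 (mul_eq_right.1 (h ▸ habc).symm)
    rw [habc]
    exact Submonoid.mul_mem _ (ih ⟨b, hb⟩ hab) (ih ⟨c, hc⟩ hac)

theorem commute_of_le_one (hwf : WellFoundedGT (Set.Iic (1 : U))) {a b : U} (ha : a ≤ 1)
    (hb : b ≤ 1) : Commute a b := by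
  have := Submonoid.isMulCommutative_closure U (s := {p : U | IsIntegralAtom p})
    fun p hp q hq => (IsIntegralAtom.commute hp hq).eq
  exact setLike_mul_comm (mem_closure_isIntegralAtom hwf ha) (mem_closure_isIntegralAtom hwf hb)

theorem commute_of_wellFoundedGT (hwf : WellFoundedGT (Set.Iic (1 : U))) (a b : U) :
    Commute a b := by
  obtain ⟨x, y, hx, hy, rfl⟩ := exists_le_one_eq_mul_inv a
  obtain ⟨z, w, hz, hw, rfl⟩ := exists_le_one_eq_mul_inv b
  have C : ∀ {a b : U}, a ≤ 1 → b ≤ 1 → Commute a b := commute_of_le_one hwf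
  exact ((C hx hz).mul_right (C hx hw).inv_right).mul_left
    ((C hy hz).mul_right (C hy hw).inv_right).inv_left

end LatticeOrderedGroup

section CommGroup

variable {U : Type*} [CommGroup U] [Lattice U]

def atomProd : Multiplicative ({p : U // IsIntegralAtom p} →₀ ℤ) →* U where
  toFun f := (Multiplicative.toAdd f).prod fun p n => (p : U) ^ n
  map_one' := Finsupp.prod_zero_index
  map_mul' _ _ := Finsupp.prod_add_index' (fun _ => zpow_zero _) fun _ => zpow_add _

theorem atomProd_ofAdd (f : {p : U // IsIntegralAtom p} →₀ ℤ) :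
    atomProd (Multiplicative.ofAdd f) = f.prod fun p n => (p : U) ^ n :=
  rfl

theorem atomProd_ofAdd_single (p : {p : U // IsIntegralAtom p}) (n : ℤ) :
    atomProd (Multiplicative.ofAdd (Finsupp.single p n)) = (p : U) ^ n :=
  Finsupp.prod_single_index (zpow_zero _)

variable [MulLeftMono U]

theorem atomProd_le_one {f : {p : U // IsIntegralAtom p} →₀ ℤ} (hf : 0 ≤ f) :
    atomProd (Multiplicative.ofAdd f) ≤ 1 := by
  rw [atomProd_ofAdd, Finsupp.prod]
  exact Finset.prod_induction _ (· ≤ 1) (fun _ _ => mul_le_one') le_rfl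
    fun p _ => zpow_le_one_of_le_one p.2.1 (hf p)

theorem atomProd_le_of_pos {f : {p : U // IsIntegralAtom p} →₀ ℤ} (hf : 0 ≤ f)
    {q : {p : U // IsIntegralAtom p}} (hq : 0 < f q) : atomProd (Multiplicative.ofAdd f) ≤ q := by
  classical
  have herase : 0 ≤ f.erase q := fun p => by
    rw [Finsupp.erase_apply]
    split_ifs
    exacts [le_rfl, hf p]
  rw [atomProd_ofAdd, ← Finsupp.mul_prod_erase f q _ (Finsupp.mem_support_iff.2 hq.ne')]
  calc (q : U) ^ f q * (f.erase q).prod (fun p n => (p : U) ^ n) ≤ (q : U) ^ f q :=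
        mul_le_of_le_one_right' (atomProd_le_one herase)
    _ = (q : U) ^ (f q - 1) * q := by rw [← zpow_add_one, sub_add_cancel]
    _ ≤ q := mul_le_of_le_one_left' (zpow_le_one_of_le_one q.2.1 (by omega))

theorem atom_sup_atomProd_eq_one {f : {p : U // IsIntegralAtom p} →₀ ℤ} (hf : 0 ≤ f)
    {q : {p : U // IsIntegralAtom p}} (hq : f q = 0) :
    (q : U) ⊔ atomProd (Multiplicative.ofAdd f) = 1 := by
  rw [atomProd_ofAdd, Finsupp.prod]
  refine Finset.prod_induction _ ((q : U) ⊔ · = 1) (fun _ _ => sup_mul_eq_one)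
    (sup_eq_right.2 q.2.1) fun p hp => ?_
  have hpq : (q : U) ≠ p := fun h => Finsupp.mem_support_iff.1 hp (Subtype.ext h ▸ hq)
  obtain ⟨n, hn⟩ := Int.eq_ofNat_of_zero_le (hf p)
  rw [hn, zpow_natCast]
  exact sup_pow_eq_one (q.2.sup_eq_one p.2 hpq) n

theorem atomProd_le_one_iff {f : {p : U // IsIntegralAtom p} →₀ ℤ} :
    atomProd (Multiplicative.ofAdd f) ≤ 1 ↔ 0 ≤ f := by
  refine ⟨fun h => ?_, atomProd_le_one⟩
  by_contra hneg
  obtain ⟨q, hq⟩ : ∃ q, f q < 0 := by simpa [Finsupp.le_def] using hneg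
  have hsplit : atomProd (Multiplicative.ofAdd f) =
      atomProd (Multiplicative.ofAdd f⁺) / atomProd (Multiplicative.ofAdd f⁻) := by
    rw [← map_div, ← ofAdd_sub, posPart_sub_negPart]
  have hle : atomProd (Multiplicative.ofAdd f⁺) ≤ q :=
    (div_le_one'.1 (hsplit ▸ h)).trans
      (atomProd_le_of_pos (negPart_nonneg f) (by simpa [negPart_def, Finsupp.sup_apply]))
  have hcoprime := atom_sup_atomProd_eq_one (posPart_nonneg f) (q := q)
    (by simp [posPart_def, Finsupp.sup_apply, hq.le])
  exact q.2.2.1 (sup_eq_left.2 hle ▸ hcoprime)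

theorem atomProd_injective : Function.Injective (atomProd (U := U)) := by
  refine (injective_iff_map_eq_one _).2 fun x hx => ?_
  have hpos : 0 ≤ Multiplicative.toAdd x := atomProd_le_one_iff.1 hx.le
  have hneg : 0 ≤ -Multiplicative.toAdd x := atomProd_le_one_iff.1 <| by
    rw [ofAdd_neg, map_inv, ofAdd_toAdd, hx, inv_one]
  exact Multiplicative.toAdd.injective (le_antisymm (neg_nonneg.1 hneg) hpos)

theorem atomProd_surjective (hwf : WellFoundedGT (Set.Iic (1 : U))) :
    Function.Surjective (atomProd (U := U)) := by
  have hatoms : Submonoid.closure {p : U | IsIntegralAtom p} ≤ atomProd.range.toSubmonoid :=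
    Submonoid.closure_le.2 fun p hp =>
      ⟨Multiplicative.ofAdd (Finsupp.single ⟨p, hp⟩ 1), by rw [atomProd_ofAdd_single, zpow_one]⟩
  intro a
  obtain ⟨x, y, hx, hy, rfl⟩ := exists_le_one_eq_mul_inv a
  exact atomProd.mem_range.1 <| mul_mem (hatoms (mem_closure_isIntegralAtom hwf hx))
    (inv_mem (hatoms (mem_closure_isIntegralAtom hwf hy)))

theorem exists_mulEquiv_freeAbelian (hwf : WellFoundedGT (Set.Iic (1 : U))) :
    ∃ e : U ≃* Multiplicative ({p : U // IsIntegralAtom p} →₀ ℤ),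
      (∀ p : {p : U // IsIntegralAtom p},
        e (p : U) = Multiplicative.ofAdd (Finsupp.single p 1)) ∧
      (∀ a : U, a ≤ 1 ↔ ∀ p, 0 ≤ Multiplicative.toAdd (e a) p) := by
  let E := MulEquiv.ofBijective atomProd ⟨atomProd_injective, atomProd_surjective hwf⟩
  refine ⟨E.symm, fun p => E.symm_apply_eq.2 ?_, fun a => ?_⟩
  · exact ((atomProd_ofAdd_single p 1).trans (zpow_one _)).symm
  · calc a ≤ 1 ↔ atomProd (E.symm a) ≤ 1 := by
          rw [show atomProd (E.symm a) = a from E.apply_symm_apply a]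
      _ ↔ _ := atomProd_le_one_iff.trans Finsupp.le_def

end CommGroup

theorem stmt5_general {U : Type*} [Lattice U] [Group U]
    [CovariantClass U U (· * ·) (· ≤ ·)]
    [CovariantClass U U (Function.swap (· * ·)) (· ≤ ·)]
    (hacc : ∀ f : ℕ → U, (∀ n, f n ≤ 1) → Monotone f → ∃ N, ∀ n, N ≤ n → f n = f N) :
    (∀ a b : U, a * b = b * a) ∧
    (∃ e : U ≃* Multiplicative ({p : U // IsIntegralAtom p} →₀ ℤ),
      (∀ p : {p : U // IsIntegralAtom p},
        e (p : U) = Multiplicative.ofAdd (Finsupp.single p 1)) ∧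
      (∀ a : U, a ≤ 1 ↔ ∀ p, 0 ≤ Multiplicative.toAdd (e a) p)) ∧
    (∀ a b : U, a ≤ 1 → b ≤ 1 →
      ((∃ c, c ≤ 1 ∧ a = (a ⊔ b) * c) ∧ (∃ c, c ≤ 1 ∧ b = (a ⊔ b) * c) ∧
        (∀ d : U, d ≤ 1 → (∃ c, c ≤ 1 ∧ a = d * c) → (∃ c, c ≤ 1 ∧ b = d * c) →
          ∃ c, c ≤ 1 ∧ (a ⊔ b) = d * c)) ∧
      ((∃ c, c ≤ 1 ∧ (a ⊓ b) = a * c) ∧ (∃ c, c ≤ 1 ∧ (a ⊓ b) = b * c) ∧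
        (∀ m : U, m ≤ 1 → (∃ c, c ≤ 1 ∧ m = a * c) → (∃ c, c ≤ 1 ∧ m = b * c) →
          ∃ c, c ≤ 1 ∧ m = (a ⊓ b) * c))) := by
  have hwf := wellFoundedGT_Iic_of_acc hacc
  have hcomm : ∀ a b : U, a * b = b * a := fun a b => (commute_of_wellFoundedGT hwf a b).eq
  refine ⟨hcomm, ?_, fun a b _ _ => ?_⟩
  · let _ : CommGroup U := { ‹Group U› with mul_comm := hcomm }
    exact exists_mulEquiv_freeAbelian hwf
  · simp only [exists_le_one_eq_mul_iff]
    exact ⟨⟨le_sup_left, le_sup_right, fun _ _ => sup_le⟩,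
      inf_le_left, inf_le_right, fun _ _ => le_inf⟩

/-- A conditionally complete lattice-ordered group satisfying the ACC on integral elements is
commutative, its monoid of integral elements is free abelian on the set of atoms, the whole
group is free abelian on the same basis (expressed by a `MulEquiv` onto the multiplicative
free abelian group `atoms →₀ ℤ` sending atoms to basis elements and integral elements to the
nonnegative part), and for integral `a, b` the join `a ⊔ b` is a gcd and the meet `a ⊓ b` is
an lcm with respect to divisibility in `U₊`. -/
theorem stmt5 {U : Type*} [Lattice U] [Group U]
    [CovariantClass U U (· * ·) (· ≤ ·)]
    [CovariantClass U U (Function.swap (· * ·)) (· ≤ ·)]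
    (hsup : ∀ s : Set U, s.Nonempty → BddAbove s → ∃ u, IsLUB s u)
    (hinf : ∀ s : Set U, s.Nonempty → BddBelow s → ∃ u, IsGLB s u)
    (hacc : ∀ f : ℕ → U, (∀ n, f n ≤ 1) → Monotone f → ∃ N, ∀ n, N ≤ n → f n = f N) :
    (∀ a b : U, a * b = b * a) ∧
    (∃ e : U ≃* Multiplicative ({p : U // IsIntegralAtom p} →₀ ℤ),
      (∀ p : {p : U // IsIntegralAtom p},
        e (p : U) = Multiplicative.ofAdd (Finsupp.single p 1)) ∧
      (∀ a : U, a ≤ 1 ↔ ∀ p, 0 ≤ Multiplicative.toAdd (e a) p)) ∧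
    (∀ a b : U, a ≤ 1 → b ≤ 1 →
      ((∃ c, c ≤ 1 ∧ a = (a ⊔ b) * c) ∧ (∃ c, c ≤ 1 ∧ b = (a ⊔ b) * c) ∧
        (∀ d : U, d ≤ 1 → (∃ c, c ≤ 1 ∧ a = d * c) → (∃ c, c ≤ 1 ∧ b = d * c) →
          ∃ c, c ≤ 1 ∧ (a ⊔ b) = d * c)) ∧
      ((∃ c, c ≤ 1 ∧ (a ⊓ b) = a * c) ∧ (∃ c, c ≤ 1 ∧ (a ⊓ b) = b * c) ∧
        (∀ m : U, m ≤ 1 → (∃ c, c ≤ 1 ∧ m = a * c) → (∃ c, c ≤ 1 ∧ m = b * c) →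
          ∃ c, c ≤ 1 ∧ m = (a ⊓ b) * c))) :=
  stmt5_general hacc
end

section
/- Let H ⊂ D be subcategories of a groupoid. The following are equivalent: (a) for all a, b ∈ H, if b right-divides a in D (i.e., a ∈ Db) then b right-divides a in H (i.e., a ∈ Hb); (b) HH⁻¹ ∩ D = H, where HH⁻¹ denotes the set of all fractions ab⁻¹ with a, b ∈ H composable appropriately. -/
/-!
In a groupoid, `a = c ≫ b` holds exactly when `c = a ≫ b⁻¹`, so the right quotient of `a` by `b`
is unique. Both conditions therefore say the same thing: a fraction `a ≫ b⁻¹` with `a, b ∈ H`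
lies in `H` as soon as it lies in `D`.
-/

open CategoryTheory

theorem Groupoid.eq_comp_inv_iff_eq_comp {C : Type*} [Groupoid C] {x y z : C}
    (a : x ⟶ y) (b : z ⟶ y) (c : x ⟶ z) : c = a ≫ Groupoid.inv b ↔ a = c ≫ b := by
  rw [Groupoid.inv_eq_inv, IsIso.eq_comp_inv, eq_comm]

theorem stmt8_general {C : Type*} [Groupoid C]
    (H D : MorphismProperty C)
    (hHD : ∀ (x y : C) (f : x ⟶ y), H f → D f)
    (hHid : ∀ x : C, H (𝟙 x)) :
    (∀ (x y z : C) (a : x ⟶ y) (b : z ⟶ y), H a → H b →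
        (∃ c : x ⟶ z, D c ∧ a = c ≫ b) → ∃ c : x ⟶ z, H c ∧ a = c ≫ b) ↔
    (∀ (x z : C) (g : x ⟶ z),
        ((∃ (y : C) (a : x ⟶ y) (b : z ⟶ y), H a ∧ H b ∧ g = a ≫ Groupoid.inv b) ∧ D g)
          ↔ H g) := by
  constructor
  · intro hsat x z g
    refine ⟨?_, fun hg => ⟨⟨z, g, 𝟙 z, hg, hHid z, by simp⟩, hHD _ _ _ hg⟩⟩
    rintro ⟨⟨y, a, b, ha, hb, hg⟩, hDg⟩
    have hab : a = g ≫ b := (Groupoid.eq_comp_inv_iff_eq_comp a b g).1 hg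
    obtain ⟨c, hc, hcb⟩ := hsat x y z a b ha hb ⟨g, hDg, hab⟩
    rwa [(cancel_mono b).1 (hcb.symm.trans hab)] at hc
  · rintro hsat x y z a b ha hb ⟨c, hDc, hcb⟩
    have hc : c = a ≫ Groupoid.inv b := (Groupoid.eq_comp_inv_iff_eq_comp a b c).2 hcb
    exact ⟨c, (hsat x z c).1 ⟨⟨y, a, b, ha, hb, hc⟩, hDc⟩, hcb⟩

/-- Let `H ⊆ D` be wide subcategories (given as morphism properties closed under identities
and composition) of a groupoid.  Then: (right divisibility in `D` between elements of `H`
implies right divisibility in `H`) if and only if `HH⁻¹ ∩ D = H`, where `HH⁻¹` is the set of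
fractions `a ≫ b⁻¹` with `a, b ∈ H` having the same target. -/
theorem stmt8 {C : Type*} [Groupoid C]
    (H D : MorphismProperty C)
    (hHD : ∀ (x y : C) (f : x ⟶ y), H f → D f)
    (hHid : ∀ x : C, H (𝟙 x)) (hDid : ∀ x : C, D (𝟙 x))
    (hHcomp : ∀ (x y z : C) (f : x ⟶ y) (g : y ⟶ z), H f → H g → H (f ≫ g))
    (hDcomp : ∀ (x y z : C) (f : x ⟶ y) (g : y ⟶ z), D f → D g → D (f ≫ g)) :
    (∀ (x y z : C) (a : x ⟶ y) (b : z ⟶ y), H a → H b →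
        (∃ c : x ⟶ z, D c ∧ a = c ≫ b) → ∃ c : x ⟶ z, H c ∧ a = c ≫ b) ↔
    (∀ (x z : C) (g : x ⟶ z),
        ((∃ (y : C) (a : x ⟶ y) (b : z ⟶ y), H a ∧ H b ∧ g = a ≫ Groupoid.inv b) ∧ D g)
          ↔ H g) :=
  stmt8_general H D hHD hHid
end

section
/- Let G be a finite abelian group and H a cancellative monoid admitting a transfer homomorphism θ: H → B(G) to the monoid of zero-sum sequences over G. Then H is half-factorial (every element has a unique factorization length) if and only if |G| ≤ 2. -/
/-- The monoid of zero-sum sequences over an abelian group `G`, realized as the submonoid of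
the (multiplicatively written) free abelian monoid `Multiplicative (Multiset G)` consisting
of sequences with sum zero. -/
def ZeroSumMonoid (G : Type*) [AddCommGroup G] : Submonoid (Multiplicative (Multiset G)) where
  carrier := {s | (Multiplicative.toAdd s).sum = 0}
  one_mem' := by simp
  mul_mem' := by
    intro a b ha hb
    simp only [Set.mem_setOf_eq, toAdd_mul, Multiset.sum_add] at *
    rw [ha, hb, add_zero]

/-!
A transfer homomorphism preserves and reflects atoms, and factorizations lift along it, so `H`
and `B(G)` have the same sets of lengths; it remains to decide when `B(G)` is half-factorial.

If `|G| ≤ 2`, every atom of `B(G)` is `0` or `g²` with `g` the nonzero element, so the weight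
`|S| + v₀(S)` of a sequence is twice the length of each of its factorizations.

If `|G| ≥ 3`, either some `g` has order `n ≥ 3`, and then `gⁿ · (-g)ⁿ = (g · (-g))ⁿ` has
factorizations of lengths `2` and `n`; or `G` has two distinct elements `g, h` of order `2`,
and then `(g h (g+h))² = g² h² (g+h)²` has factorizations of lengths `2` and `3`.
-/

def IsHalfFactorial (M : Type*) [Monoid M] : Prop :=
  ∀ a : M, ∃ n : ℕ, LengthSet a = {n}

theorem IsHalfFactorial.eq_of_mem_lengthSet {M : Type*} [Monoid M] (hM : IsHalfFactorial M)
    {a : M} {m n : ℕ} (hm : m ∈ LengthSet a) (hn : n ∈ LengthSet a) : m = n := by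
  obtain ⟨k, hk⟩ := hM a
  rw [hk] at hm hn
  exact hm.trans hn.symm

theorem mem_lengthSet_iff_of_subsingleton_units {M : Type*} [Monoid M] [Subsingleton Mˣ]
    {a : M} {n : ℕ} : n ∈ LengthSet a ↔
      ∃ L : List M, L.length = n ∧ (∀ x ∈ L, Irreducible x) ∧ a = L.prod := by
  constructor
  · rintro ⟨ε, L, hn, hL, rfl⟩
    exact ⟨L, hn, hL, by rw [Subsingleton.elim ε 1, Units.val_one, one_mul]⟩
  · rintro ⟨L, hn, hL, rfl⟩
    exact ⟨1, L, hn, hL, by rw [Units.val_one, one_mul]⟩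

section Transfer

variable {H K : Type*} [Monoid H] [Monoid K] (θ : H →* K)
  (hker : ∀ a : H, θ a = 1 ↔ IsUnit a)
  (hT2 : ∀ (a : H) (b₁ b₂ : K), θ a = b₁ * b₂ →
    ∃ a₁ a₂ : H, a = a₁ * a₂ ∧ θ a₁ = b₁ ∧ θ a₂ = b₂)

include hker hT2

theorem exists_list_map_eq_of_map_eq_prod (M : List K) (a : H) (h : θ a = M.prod) :
    ∃ (ε : Hˣ) (L : List H), L.map θ = M ∧ a = ε * L.prod := by
  induction M generalizing a with
  | nil => exact ⟨((hker a).mp h).unit, [], rfl, by simp⟩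
  | cons b M ih =>
    obtain ⟨a₁, a₂, rfl, rfl, h₂⟩ := hT2 a b M.prod h
    obtain ⟨ε, L, rfl, rfl⟩ := ih a₂ h₂
    refine ⟨1, (a₁ * ε) :: L, ?_, by simp [mul_assoc]⟩
    rw [List.map_cons, map_mul, (hker ε).mpr ε.isUnit, mul_one]

variable [Subsingleton Kˣ]

theorem irreducible_map_iff {a : H} : Irreducible (θ a) ↔ Irreducible a := by
  refine ⟨fun h => ?_, fun h => ⟨fun hu => h.not_isUnit ((hker a).mp (isUnit_iff_eq_one.mp hu)),
    fun b₁ b₂ hb => ?_⟩⟩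
  · have : IsLocalHom θ := ⟨fun a ha => (hker a).mp (isUnit_iff_eq_one.mp ha)⟩
    exact h.of_map
  · obtain ⟨a₁, a₂, rfl, rfl, rfl⟩ := hT2 a b₁ b₂ hb
    exact (h.isUnit_or_isUnit rfl).imp (fun hu => hu.map θ) (fun hu => hu.map θ)

theorem lengthSet_map (a : H) : LengthSet (θ a) = LengthSet a := by
  ext n
  rw [mem_lengthSet_iff_of_subsingleton_units]
  constructor
  · rintro ⟨M, rfl, hM, h⟩
    obtain ⟨ε, L, rfl, ha⟩ := exists_list_map_eq_of_map_eq_prod θ hker hT2 M a h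
    refine ⟨ε, L, (L.length_map θ).symm, fun x hx => ?_, ha⟩
    exact (irreducible_map_iff θ hker hT2).mp (hM _ (List.mem_map_of_mem hx))
  · rintro ⟨ε, L, rfl, hL, rfl⟩
    refine ⟨L.map θ, L.length_map θ, ?_, ?_⟩
    · simpa only [List.forall_mem_map] using
        fun x hx => (irreducible_map_iff θ hker hT2).mpr (hL x hx)
    · rw [map_mul, (hker ε).mpr ε.isUnit, one_mul, map_list_prod]

theorem isHalfFactorial_iff_of_surjective (hsurj : Function.Surjective θ) :
    IsHalfFactorial H ↔ IsHalfFactorial K :=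
  (hsurj.forall.trans (forall_congr' fun a => by rw [lengthSet_map θ hker hT2])).symm

end Transfer

theorem eq_of_ne_zero_of_card_le_two {G : Type*} [Zero G] [Fintype G]
    (hG : Fintype.card G ≤ 2) {x y : G} (hx : x ≠ 0) (hy : y ≠ 0) : x = y := by
  classical
  refine Finset.card_le_one.mp ?_ x (Finset.mem_erase.mpr ⟨hx, Finset.mem_univ x⟩)
    y (Finset.mem_erase.mpr ⟨hy, Finset.mem_univ y⟩)
  rw [Finset.card_erase_of_mem (Finset.mem_univ 0), Finset.card_univ]
  omega

namespace ZeroSumMonoid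

variable {G : Type*} [AddCommGroup G]

def toMultiset (s : ZeroSumMonoid G) : Multiset G := Multiplicative.toAdd s.val

def mk (t : Multiset G) (ht : t.sum = 0) : ZeroSumMonoid G := ⟨Multiplicative.ofAdd t, ht⟩

@[simp]
theorem toMultiset_mk (t : Multiset G) (ht : t.sum = 0) : toMultiset (mk t ht) = t := rfl

@[simp]
theorem toMultiset_one : toMultiset (1 : ZeroSumMonoid G) = 0 := rfl

@[simp]
theorem toMultiset_mul (s t : ZeroSumMonoid G) : toMultiset (s * t) = toMultiset s + toMultiset t :=
  rfl

@[simp]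
theorem toMultiset_pow (s : ZeroSumMonoid G) (n : ℕ) : toMultiset (s ^ n) = n • toMultiset s :=
  rfl

@[simp]
theorem sum_toMultiset (s : ZeroSumMonoid G) : (toMultiset s).sum = 0 := s.2

theorem toMultiset_injective : Function.Injective (toMultiset (G := G)) :=
  fun _ _ h => Subtype.ext (Multiplicative.toAdd.injective h)

@[simp]
theorem toMultiset_eq_zero {s : ZeroSumMonoid G} : toMultiset s = 0 ↔ s = 1 :=
  toMultiset_injective.eq_iff' rfl

instance : Subsingleton (ZeroSumMonoid G)ˣ := by
  suffices h : ∀ u : (ZeroSumMonoid G)ˣ, u = 1 from ⟨fun u v => (h u).trans (h v).symm⟩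
  intro u
  have h := congrArg toMultiset u.mul_inv
  rw [toMultiset_mul, toMultiset_one, add_eq_zero, toMultiset_eq_zero] at h
  exact Units.ext h.1

theorem irreducible_iff_forall_le {s : ZeroSumMonoid G} :
    Irreducible s ↔ toMultiset s ≠ 0 ∧
      ∀ t ≤ toMultiset s, t.sum = 0 → t = 0 ∨ t = toMultiset s := by
  rw [irreducible_iff, isUnit_iff_eq_one, ← toMultiset_eq_zero]
  refine and_congr_right fun _ => ⟨fun h t ht hsum => ?_, fun h a b hab => ?_⟩
  · obtain ⟨u, hu⟩ := Multiset.le_iff_exists_add.mp ht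
    have husum : u.sum = 0 := by
      simpa [hsum] using congrArg Multiset.sum hu.symm
    have hs : s = mk t hsum * mk u husum := toMultiset_injective (by simpa using hu)
    rcases h hs with h | h
    · left; simpa using congrArg toMultiset (isUnit_iff_eq_one.mp h)
    · right; simpa [hs] using congrArg toMultiset (isUnit_iff_eq_one.mp h)
  · have hab' : toMultiset s = toMultiset a + toMultiset b := by rw [hab, toMultiset_mul]
    rcases h (toMultiset a) (hab' ▸ Multiset.le_add_right _ _) (sum_toMultiset a) with h | h
    · exact Or.inl (isUnit_iff_eq_one.mpr (toMultiset_eq_zero.mp h))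
    · refine Or.inr (isUnit_iff_eq_one.mpr (toMultiset_eq_zero.mp ?_))
      rwa [hab', left_eq_add] at h

theorem exists_list_irreducible_prod_eq (s : ZeroSumMonoid G) :
    ∃ L : List (ZeroSumMonoid G), (∀ x ∈ L, Irreducible x) ∧ L.prod = s := by
  induction hs : Multiset.card (toMultiset s) using Nat.strong_induction_on generalizing s with
  | _ n ih =>
  by_cases hunit : IsUnit s
  · exact ⟨[], by simp, (isUnit_iff_eq_one.mp hunit).symm⟩
  by_cases hirr : Irreducible s
  · exact ⟨[s], by simpa using hirr, List.prod_singleton⟩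
  obtain ⟨a, b, rfl, ha, hb⟩ : ∃ a b, s = a * b ∧ ¬IsUnit a ∧ ¬IsUnit b := by
    rw [irreducible_iff] at hirr
    push Not at hirr
    exact hirr hunit
  have hcard (c : ZeroSumMonoid G) (hc : ¬IsUnit c) : 0 < Multiset.card (toMultiset c) := by
    rw [Multiset.card_pos, Ne, toMultiset_eq_zero, ← isUnit_iff_eq_one]
    exact hc
  have hn : Multiset.card (toMultiset a) + Multiset.card (toMultiset b) = n := by
    rw [← hs, toMultiset_mul, Multiset.card_add]
  obtain ⟨La, hLa, rfl⟩ := ih _ (by linarith [hcard b hb]) a rfl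
  obtain ⟨Lb, hLb, rfl⟩ := ih _ (by linarith [hcard _ ha]) b rfl
  refine ⟨La ++ Lb, fun x hx => ?_, List.prod_append⟩
  exact (List.mem_append.mp hx).elim (hLa x) (hLb x)

theorem irreducible_of_card_le_three {s : ZeroSumMonoid G} (hne : toMultiset s ≠ 0)
    (h0 : (0 : G) ∉ toMultiset s) (hcard : Multiset.card (toMultiset s) ≤ 3) :
    Irreducible s := by
  have small (u : Multiset G) (hu : u ≤ toMultiset s) (husum : u.sum = 0)
      (hcard : Multiset.card u ≤ 1) : u = 0 := by
    rcases Nat.le_one_iff_eq_zero_or_eq_one.mp hcard with h | h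
    · exact Multiset.card_eq_zero.mp h
    · obtain ⟨x, rfl⟩ := Multiset.card_eq_one.mp h
      rw [Multiset.sum_singleton] at husum
      exact absurd (Multiset.singleton_le.mp (husum ▸ hu)) h0
  refine irreducible_iff_forall_le.mpr ⟨hne, fun u hu husum => ?_⟩
  obtain ⟨v, hv⟩ := Multiset.le_iff_exists_add.mp hu
  have hvsum : v.sum = 0 := by simpa [husum] using congrArg Multiset.sum hv.symm
  rw [hv, Multiset.card_add] at hcard
  by_cases hu1 : Multiset.card u ≤ 1
  · exact Or.inl (small u hu husum hu1)
  · right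
    rw [hv, small v (hv ▸ Multiset.le_add_left _ _) hvsum (by omega), add_zero]

theorem irreducible_of_toMultiset_eq_replicate_addOrderOf {s : ZeroSumMonoid G} {g : G}
    (hg : IsOfFinAddOrder g) (hs : toMultiset s = Multiset.replicate (addOrderOf g) g) :
    Irreducible s := by
  refine irreducible_iff_forall_le.mpr ⟨?_, fun u hu husum => ?_⟩
  · rw [hs, ← Multiset.card_pos, Multiset.card_replicate]
    exact hg.addOrderOf_pos
  · rw [hs] at hu ⊢
    obtain ⟨k, hk, rfl⟩ := Multiset.le_replicate_iff.mp hu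
    rw [Multiset.sum_replicate, ← addOrderOf_dvd_iff_nsmul_eq_zero] at husum
    rcases hk.lt_or_eq with hk | rfl
    · simp [Nat.eq_zero_of_dvd_of_lt husum hk]
    · exact Or.inr rfl

section Weight

variable [DecidableEq G]

def weight (s : ZeroSumMonoid G) : ℕ :=
  Multiset.card (toMultiset s) + (toMultiset s).count 0

theorem weight_mul (s t : ZeroSumMonoid G) : weight (s * t) = weight s + weight t := by
  simp only [weight, toMultiset_mul, Multiset.card_add, Multiset.count_add]
  ring

theorem weight_eq_two_of_irreducible [Fintype G] (hG : Fintype.card G ≤ 2)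
    {s : ZeroSumMonoid G} (hs : Irreducible s) : weight s = 2 := by
  obtain ⟨hne, hmin⟩ := irreducible_iff_forall_le.mp hs
  by_cases h0 : (0 : G) ∈ toMultiset s
  · have hs0 : {0} = toMultiset s :=
      (hmin {0} (Multiset.singleton_le.mpr h0) (by simp)).resolve_left
        (Multiset.singleton_ne_zero 0)
    simp [weight, ← hs0]
  obtain ⟨g, hg⟩ := Multiset.exists_mem_of_ne_zero hne
  have hg0 : g ≠ 0 := ne_of_mem_of_not_mem hg h0
  have hrep : toMultiset s = Multiset.replicate (Multiset.card (toMultiset s)) g :=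
    Multiset.eq_replicate_card.mpr fun x hx =>
      eq_of_ne_zero_of_card_le_two hG (ne_of_mem_of_not_mem hx h0) hg0
  have h2g : 2 • g = 0 := by
    by_contra h
    rw [two_nsmul] at h
    exact hg0 (add_eq_left.mp (eq_of_ne_zero_of_card_le_two hG h hg0))
  have hcard : 2 ≤ Multiset.card (toMultiset s) := by
    have hsum := sum_toMultiset s
    rw [hrep, Multiset.sum_replicate] at hsum
    have : Multiset.card (toMultiset s) ≠ 0 := by simpa using hne
    have : Multiset.card (toMultiset s) ≠ 1 := by rintro h; simp [h, hg0] at hsum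
    omega
  have hs2 : Multiset.replicate 2 g = toMultiset s :=
    (hmin _ (hrep ▸ (Multiset.replicate_le_replicate g).mpr hcard)
      (by rw [Multiset.sum_replicate, h2g])).resolve_left (by simp)
  simp [weight, ← hs2, hg0.symm]

theorem weight_prod_of_card_le_two [Fintype G] (hG : Fintype.card G ≤ 2)
    {L : List (ZeroSumMonoid G)} (hL : ∀ x ∈ L, Irreducible x) :
    weight L.prod = 2 * L.length := by
  induction L with
  | nil => simp [weight]
  | cons a L ih =>
    rw [List.prod_cons, weight_mul, weight_eq_two_of_irreducible hG (hL a List.mem_cons_self),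
      ih fun x hx => hL x (List.mem_cons_of_mem a hx), List.length_cons]
    ring

end Weight

theorem isHalfFactorial_of_card_le_two [Fintype G] (hG : Fintype.card G ≤ 2) :
    IsHalfFactorial (ZeroSumMonoid G) := by
  classical
  intro s
  obtain ⟨L, hL, rfl⟩ := exists_list_irreducible_prod_eq s
  refine ⟨L.length, Set.eq_singleton_iff_unique_mem.mpr
    ⟨mem_lengthSet_iff_of_subsingleton_units.mpr ⟨L, rfl, hL, rfl⟩, fun n hn => ?_⟩⟩
  obtain ⟨L', rfl, hL', h⟩ := mem_lengthSet_iff_of_subsingleton_units.mp hn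
  have hlen := (weight_prod_of_card_le_two hG hL).symm.trans
    (h ▸ weight_prod_of_card_le_two hG hL')
  omega

theorem exists_two_and_addOrderOf_mem_lengthSet {g : G} (hg0 : g ≠ 0) (hg : IsOfFinAddOrder g) :
    ∃ s : ZeroSumMonoid G, 2 ∈ LengthSet s ∧ addOrderOf g ∈ LengthSet s := by
  set n := addOrderOf g
  let A := mk (Multiset.replicate n g) (by simp [n, addOrderOf_nsmul_eq_zero])
  let B := mk (Multiset.replicate n (-g)) (by simp [n, addOrderOf_nsmul_eq_zero])
  let C := mk {g, -g} (by simp)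
  have hA : Irreducible A := irreducible_of_toMultiset_eq_replicate_addOrderOf hg rfl
  have hB : Irreducible B :=
    irreducible_of_toMultiset_eq_replicate_addOrderOf hg.neg (by rw [addOrderOf_neg]; rfl)
  have hC : Irreducible C :=
    irreducible_of_card_le_three (by simp [C]) (by simp [C, hg0, hg0.symm]) (by simp [C])
  refine ⟨A * B, mem_lengthSet_iff_of_subsingleton_units.mpr ⟨[A, B], rfl, ?_, by simp⟩,
    mem_lengthSet_iff_of_subsingleton_units.mpr
      ⟨List.replicate n C, List.length_replicate, ?_, ?_⟩⟩
  · simpa using ⟨hA, hB⟩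
  · simpa using fun _ => hC
  · apply toMultiset_injective
    rw [List.prod_replicate, toMultiset_pow, toMultiset_mul]
    simp only [A, B, C, toMultiset_mk]
    rw [Multiset.insert_eq_cons, ← Multiset.singleton_add, nsmul_add, Multiset.nsmul_singleton,
      Multiset.nsmul_singleton]

theorem exists_two_and_three_mem_lengthSet {g h : G} (hg : g ≠ 0) (hh : h ≠ 0) (hgh : g ≠ h)
    (hg2 : g + g = 0) (hh2 : h + h = 0) :
    ∃ s : ZeroSumMonoid G, 2 ∈ LengthSet s ∧ 3 ∈ LengthSet s := by
  classical
  have hk : g + h ≠ 0 := fun h0 =>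
    hgh (by rw [eq_neg_of_add_eq_zero_left h0, neg_eq_of_add_eq_zero_left hh2])
  let U := mk {g, h, g + h} (by
    simp only [Multiset.insert_eq_cons, Multiset.sum_cons, Multiset.sum_singleton]
    rw [show g + (h + (g + h)) = (g + g) + (h + h) by abel, hg2, hh2, add_zero])
  let V (x : G) (hx : x + x = 0) := mk {x, x} (by simpa using hx)
  have hU : Irreducible U := irreducible_of_card_le_three (by simp [U])
    (by simp [U, hg.symm, hh.symm, hk.symm]) (by simp [U])
  have hV (x : G) (hx : x + x = 0) (hx0 : x ≠ 0) : Irreducible (V x hx) :=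
    irreducible_of_card_le_three (by simp [V]) (by simp [V, hx0.symm]) (by simp [V])
  have hk2 : (g + h) + (g + h) = 0 := by rw [add_add_add_comm, hg2, hh2, add_zero]
  refine ⟨U * U,
    mem_lengthSet_iff_of_subsingleton_units.mpr ⟨[U, U], rfl, by simpa using hU, by simp⟩,
    mem_lengthSet_iff_of_subsingleton_units.mpr
      ⟨[V g hg2, V h hh2, V (g + h) hk2], rfl, ?_, ?_⟩⟩
  · simpa using ⟨hV g hg2 hg, hV h hh2 hh, hV _ hk2 hk⟩
  · apply toMultiset_injective
    ext a
    simp only [U, V, List.prod_cons, List.prod_nil, mul_one, toMultiset_mul, toMultiset_mk,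
      Multiset.insert_eq_cons, Multiset.count_add, Multiset.count_cons, Multiset.count_singleton]
    omega

theorem not_isHalfFactorial_of_two_lt_card [Fintype G] (hG : 2 < Fintype.card G) :
    ¬IsHalfFactorial (ZeroSumMonoid G) := by
  classical
  intro hHF
  by_cases hexp : ∃ g : G, g + g ≠ 0
  · obtain ⟨g, hg⟩ := hexp
    have hg0 : g ≠ 0 := by rintro rfl; simp at hg
    obtain ⟨s, h2, hn⟩ :=
      exists_two_and_addOrderOf_mem_lengthSet hg0 (isOfFinAddOrder_of_finite g)
    apply hg
    rw [← two_nsmul, hHF.eq_of_mem_lengthSet h2 hn, addOrderOf_nsmul_eq_zero]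
  · push Not at hexp
    obtain ⟨g, hg, h, hh, hgh⟩ := (Finset.one_lt_card (s := Finset.univ.erase (0 : G))).mp (by
      rw [Finset.card_erase_of_mem (Finset.mem_univ 0), Finset.card_univ]
      omega)
    obtain ⟨s, h2, h3⟩ := exists_two_and_three_mem_lengthSet (Finset.ne_of_mem_erase hg)
      (Finset.ne_of_mem_erase hh) hgh (hexp g) (hexp h)
    exact absurd (hHF.eq_of_mem_lengthSet h2 h3) (by norm_num)

theorem isHalfFactorial_iff_card_le_two [Fintype G] :
    IsHalfFactorial (ZeroSumMonoid G) ↔ Fintype.card G ≤ 2 :=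
  ⟨fun h => not_lt.mp fun hG => not_isHalfFactorial_of_two_lt_card hG h,
    isHalfFactorial_of_card_le_two⟩

end ZeroSumMonoid

/-- If `G` is a finite abelian group and the cancellative monoid `H` admits a transfer
homomorphism `θ : H → B(G)` onto the monoid of zero-sum sequences over `G`, then `H` is
half-factorial if and only if `|G| ≤ 2`. -/
theorem stmt9 {H : Type*} [CancelMonoid H] {G : Type*} [AddCommGroup G] [Fintype G]
    (θ : H →* ZeroSumMonoid G)
    (hsurj : Function.Surjective θ)
    (hker : ∀ a : H, θ a = 1 ↔ IsUnit a)
    (hT2 : ∀ (a : H) (b₁ b₂ : ZeroSumMonoid G), θ a = b₁ * b₂ →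
      ∃ a₁ a₂ : H, a = a₁ * a₂ ∧ θ a₁ = b₁ ∧ θ a₂ = b₂) :
    (∀ a : H, ∃ n : ℕ, LengthSet a = {n}) ↔ Fintype.card G ≤ 2 :=
  (isHalfFactorial_iff_of_surjective θ hker hT2 hsurj).trans
    ZeroSumMonoid.isHalfFactorial_iff_card_le_two
end

section
/- Let S be a zero-sum sequence over a subset G_P of an abelian group and U an atom of the monoid B(G_P) of zero-sum sequences. Then the maximum length of a factorization of SU into atoms of B(G_P) is at most |S| + 1, where |S| is the number of terms of S. -/
/-!
Peel the atoms off a factorization `S·U = A₁⋯Aₙ` one at a time. An atom contained in `U` is a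
nonempty zero-sum subsequence of the atom `U`, hence equal to `U`, and the remaining atoms, all
nonempty, then divide `S`. Any other atom uses up at least one term of `S`. So all atoms but at
most one are paid for by distinct terms of `S`.
-/

/-- The monoid `B(G_P)` of zero-sum sequences over a subset `G_P` of an abelian group `G`,
realized as a submonoid of the free abelian monoid `Multiplicative (Multiset G)`. -/
def ZeroSumOver {G : Type*} [AddCommGroup G] (GP : Set G) :
    Submonoid (Multiplicative (Multiset G)) where
  carrier := {s | (Multiplicative.toAdd s).sum = 0 ∧ ∀ g ∈ Multiplicative.toAdd s, g ∈ GP}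
  one_mem' := by
    constructor
    · simp
    · intro g hg
      simp only [toAdd_one] at hg
      exact absurd hg (Multiset.notMem_zero g)
  mul_mem' := by
    intro a b ha hb
    refine ⟨?_, ?_⟩
    · have : (Multiplicative.toAdd (a * b)) = Multiplicative.toAdd a + Multiplicative.toAdd b :=
        rfl
      rw [this, Multiset.sum_add, ha.1, hb.1, add_zero]
    · intro g hg
      have : (Multiplicative.toAdd (a * b)) = Multiplicative.toAdd a + Multiplicative.toAdd b :=
        rfl
      rw [this, Multiset.mem_add] at hg
      rcases hg with hg | hg
      · exact ha.2 g hg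
      · exact hb.2 g hg

namespace Multiset

variable {α : Type*}

theorem length_le_card_sum {L : List (Multiset α)} (hL : ∀ A ∈ L, A ≠ 0) :
    L.length ≤ card L.sum := by
  induction L with
  | nil => simp
  | cons A L ih =>
    have hA := card_pos.2 (hL A List.mem_cons_self)
    have hlen := ih fun B hB => hL B (List.mem_cons_of_mem A hB)
    simp only [List.length_cons, List.sum_cons, card_add]
    omega

theorem card_tsub_lt_of_le_add [DecidableEq α] {A s u : Multiset α} (hA : A ≤ s + u)
    (hAu : ¬A ≤ u) : card (s - A) < card s := by
  obtain ⟨g, hg⟩ : ∃ g, count g u < count g A := by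
    simpa [le_iff_count] using hAu
  have hgs := (le_iff_count.1 hA) g
  refine card_lt_card (lt_of_le_of_ne tsub_le_self fun h => ?_)
  have hcount := congrArg (count g) h
  rw [count_add] at hgs
  rw [count_sub] at hcount
  omega

theorem length_le_card_add_one [DecidableEq α] {L : List (Multiset α)} {s u : Multiset α}
    (hne : ∀ A ∈ L, A ≠ 0) (hu : ∀ A ∈ L, A ≤ u → A = u) (hL : L.sum ≤ s + u) :
    L.length ≤ card s + 1 := by
  induction L generalizing s with
  | nil => simp
  | cons A L ih =>
    rw [List.sum_cons] at hL
    have hA : A ≤ s + u := le_trans le_self_add hL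
    by_cases hAu : A ≤ u
    · obtain rfl := hu A List.mem_cons_self hAu
      have hLs : L.sum ≤ s := by
        rw [add_comm s] at hL
        exact (add_le_add_iff_left A).1 hL
      have hlen := length_le_card_sum fun B hB => hne B (List.mem_cons_of_mem A hB)
      have hcard := card_le_card hLs
      simp only [List.length_cons]
      omega
    · have hLs : L.sum ≤ s - A + u :=
        (le_tsub_of_add_le_left hL).trans add_tsub_le_tsub_add
      have hlen := ih (fun B hB => hne B (List.mem_cons_of_mem A hB))
        (fun B hB => hu B (List.mem_cons_of_mem A hB)) hLs
      have hcard := card_tsub_lt_of_le_add hA hAu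
      simp only [List.length_cons]
      omega

end Multiset

namespace ZeroSumOver

open Multiplicative

variable {G : Type*} [AddCommGroup G] {GP : Set G}

theorem dvd_iff_le {x y : ZeroSumOver GP} :
    x ∣ y ↔
      toAdd (x : Multiplicative (Multiset G)) ≤ toAdd (y : Multiplicative (Multiset G)) := by
  constructor
  · rintro ⟨z, rfl⟩
    exact le_self_add
  · intro h
    obtain ⟨d, hd⟩ := Multiset.le_iff_exists_add.1 h
    obtain ⟨hy_sum, hy_mem⟩ := y.2
    refine ⟨⟨ofAdd d, ?_, fun g hg => hy_mem g (hd ▸ Multiset.mem_add.2 (Or.inr hg))⟩,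
      Subtype.ext hd⟩
    rw [hd, Multiset.sum_add, x.2.1, zero_add] at hy_sum
    exact hy_sum

theorem eq_one_of_isUnit {x : ZeroSumOver GP} (hx : IsUnit x) : x = 1 :=
  Subtype.ext (toAdd.injective (nonpos_iff_eq_zero.1 (dvd_iff_le.1 (isUnit_iff_dvd_one.1 hx))))

theorem toAdd_ne_zero_of_irreducible {x : ZeroSumOver GP} (hx : Irreducible x) :
    toAdd (x : Multiplicative (Multiset G)) ≠ 0 := fun h =>
  hx.not_isUnit (by rw [show x = 1 from Subtype.ext h]; exact isUnit_one)

theorem eq_of_le_of_irreducible {x y : ZeroSumOver GP} (hx : Irreducible x) (hy : Irreducible y)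
    (h : toAdd (x : Multiplicative (Multiset G)) ≤ toAdd (y : Multiplicative (Multiset G))) :
    x = y :=
  Subtype.ext (toAdd.injective (le_antisymm h (dvd_iff_le.1 (hx.dvd_symm hy (dvd_iff_le.2 h)))))

theorem toAdd_list_prod (L : List (ZeroSumOver GP)) :
    toAdd ((L.prod : ZeroSumOver GP) : Multiplicative (Multiset G)) =
      (L.map fun x : ZeroSumOver GP => toAdd (x : Multiplicative (Multiset G))).sum := by
  rw [Submonoid.coe_list_prod, toAdd_list_sum, List.map_map]
  rfl

end ZeroSumOver

/-- If `S` is a zero-sum sequence over `G_P` and `U` an atom of `B(G_P)`, then every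
factorization length of `S·U` is at most `|S| + 1`. -/
theorem stmt12 {G : Type*} [AddCommGroup G] (GP : Set G)
    (S U : ZeroSumOver GP) (hU : Irreducible U) :
    ∀ n ∈ LengthSet (S * U),
      n ≤ Multiset.card (Multiplicative.toAdd (S : Multiplicative (Multiset G))) + 1 := by
  classical
  rintro n ⟨ε, L, rfl, hL, hSU⟩
  rw [ZeroSumOver.eq_one_of_isUnit ε.isUnit, one_mul] at hSU
  have hsum :=
    congrArg (fun x : ZeroSumOver GP => Multiplicative.toAdd (x : Multiplicative (Multiset G))) hSU
  simp only [ZeroSumOver.toAdd_list_prod] at hsum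
  rw [← L.length_map]
  refine Multiset.length_le_card_add_one
    (u := Multiplicative.toAdd (U : Multiplicative (Multiset G)))
    (List.forall_mem_map.2 fun A hA => ZeroSumOver.toAdd_ne_zero_of_irreducible (hL A hA))
    (List.forall_mem_map.2 fun A hA hAU => ?_) hsum.ge
  rw [ZeroSumOver.eq_of_le_of_irreducible (hL A hA) hU hAU]
end

section
/- Let H be a maximal order in a quotient semigroup Q and I a fractional left H-ideal. Then (I·I⁻¹)_v = O_l(I), and if O_r(I) is also a maximal order then (I⁻¹·I)_v = O_r(I). In particular every divisorial fractional left H-ideal is v-invertible. -/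
/-!
`O_l(I)` is maximal among the multiplicatively closed oversets that units sandwich back into it.
Both `O_l(I·I⁻¹)` and `O_l(I_v)` are such oversets (a unit of `I` and one of `I⁻¹` do the
sandwiching), so both equal `O_l(I)`. If `q ∈ (I·I⁻¹)⁻¹` then `I·I⁻¹·q ⊆ O_l(I·I⁻¹) = O_l(I)`,
hence `I⁻¹q ⊆ I⁻¹` and `q ∈ O_l(I_v) = O_l(I)`. So `(I·I⁻¹)⁻¹ = O_l(I)`, a monoid, which is its
own inverse. The statement for `O_r(I)` is the same argument in `Qᵐᵒᵖ`.
-/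

namespace QSemi

variable {Q : Type*} [Monoid Q]

/-- The left order `O_l(X) = {q : qX ⊆ X}` of a subset `X` of a quotient semigroup. -/
def Ol (X : Set Q) : Set Q := {q | ∀ x ∈ X, q * x ∈ X}

/-- The right order `O_r(X) = {q : Xq ⊆ X}` of a subset `X` of a quotient semigroup. -/
def Orr (X : Set Q) : Set Q := {q | ∀ x ∈ X, x * q ∈ X}

/-- The inverse `X⁻¹ = {q : XqX ⊆ X}` of a subset `X` of a quotient semigroup. -/
def inv (X : Set Q) : Set Q := {q | ∀ x ∈ X, ∀ y ∈ X, x * q * y ∈ X}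

/-- A monoid is a quotient semigroup if every cancellative element is invertible. -/
def IsQuotientSemigroup (Q : Type*) [Monoid Q] : Prop :=
  ∀ q : Q, ((∀ a b : Q, q * a = q * b → a = b) ∧ (∀ a b : Q, a * q = b * q → a = b)) → IsUnit q

/-- `H` is an order in the quotient semigroup `Q`: a subsemigroup with
`H (H ∩ Q^×)⁻¹ = (H ∩ Q^×)⁻¹ H = Q`. -/
def IsOrder (H : Set Q) : Prop :=
  (1 : Q) ∈ H ∧ (∀ a ∈ H, ∀ b ∈ H, a * b ∈ H) ∧
  (∀ q : Q, ∃ a ∈ H, ∃ s : Qˣ, (s : Q) ∈ H ∧ q = a * (↑s⁻¹ : Q)) ∧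
  (∀ q : Q, ∃ a ∈ H, ∃ s : Qˣ, (s : Q) ∈ H ∧ q = (↑s⁻¹ : Q) * a)

/-- Asano equivalence of orders: `aHb ⊆ H'` and `cH'd ⊆ H` for suitable units. -/
def OrdEquiv (H H' : Set Q) : Prop :=
  (∃ a b : Qˣ, ∀ h ∈ H, (a : Q) * h * (b : Q) ∈ H') ∧
  (∃ c d : Qˣ, ∀ h ∈ H', (c : Q) * h * (d : Q) ∈ H)

/-- `H` is a maximal order: an order maximal (w.r.t. inclusion) within its equivalence
class of orders. -/
def IsMaximalOrder (H : Set Q) : Prop :=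
  IsOrder H ∧ ∀ H' : Set Q, IsOrder H' → OrdEquiv H H' → H ⊆ H' → H' = H

/-- `I` is a fractional left `H`-ideal: a left `H`-module meeting `Q^×` with
`(H : I)_r ∩ Q^× ≠ ∅`. -/
def IsFracLeftIdeal (H I : Set Q) : Prop :=
  (∀ h ∈ H, ∀ x ∈ I, h * x ∈ I) ∧ (∃ x ∈ I, IsUnit x) ∧
  (∃ q : Q, IsUnit q ∧ ∀ x ∈ I, x * q ∈ H)

end QSemi

open QSemi Pointwise

namespace QSemi

open MulOpposite

variable {Q : Type*} [Monoid Q] {X : Set Q}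

lemma one_mem_ol : (1 : Q) ∈ Ol X := fun x hx => by simpa using hx

lemma mul_mem_ol {a b : Q} (ha : a ∈ Ol X) (hb : b ∈ Ol X) : a * b ∈ Ol X :=
  fun x hx => by simpa [mul_assoc] using ha _ (hb x hx)

lemma inv_eq_self {S : Set Q} (h1 : (1 : Q) ∈ S) (hmul : ∀ a ∈ S, ∀ b ∈ S, a * b ∈ S) :
    inv S = S := by
  ext q
  exact ⟨fun hq => by simpa using hq 1 h1 1 h1, fun hq a ha b hb => hmul _ (hmul a ha q hq) b hb⟩

lemma mul_mem_ol_of_mem_inv {q a : Q} (hq : q ∈ inv X) (ha : a ∈ X) : a * q ∈ Ol X :=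
  fun y hy => hq a ha y hy

lemma subset_inv_inv (X : Set Q) : X ⊆ inv (inv X) :=
  fun y hy u hu u' hu' z hz z' hz' => by simpa [mul_assoc] using hu' _ (hu z hz y hy) z' hz'

lemma ol_subset_orr_inv (X : Set Q) : Ol X ⊆ Orr (inv X) :=
  fun h hh u hu z hz z' hz' => by simpa [mul_assoc] using hu z hz _ (hh z' hz')

lemma orr_inv_subset_ol_inv_inv (X : Set Q) : Orr (inv X) ⊆ Ol (inv (inv X)) :=
  fun q hq r hr u hu u' hu' => by simpa [mul_assoc] using hr _ (hq u hu) u' hu'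

lemma mul_inv_subset_ol (X : Set Q) : X * inv X ⊆ Ol X := by
  rintro _ ⟨y, hy, u, hu, rfl⟩ z hz
  simpa [mul_assoc] using hu y hy z hz

lemma mul_mem_mul_inv {a b : Q} (ha : a ∈ X * inv X) (hb : b ∈ X * inv X) :
    a * b ∈ X * inv X := by
  obtain ⟨y, hy, u, hu, rfl⟩ := ha
  obtain ⟨y', hy', u', hu', rfl⟩ := hb
  have huyu : u * y' * u' ∈ inv X := fun z hz z' hz' => by
    simpa [mul_assoc] using hu' _ (hu z hz y' hy') z' hz'
  simpa [mul_assoc] using Set.mul_mem_mul hy huyu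

lemma ol_subset_ol_mul_inv (X : Set Q) : Ol X ⊆ Ol (X * inv X) := by
  rintro h hh _ ⟨y, hy, u, hu, rfl⟩
  simpa [mul_assoc] using Set.mul_mem_mul (hh y hy) hu

lemma ol_subset_orr_mul_inv (X : Set Q) : Ol X ⊆ Orr (X * inv X) := by
  rintro h hh _ ⟨y, hy, u, hu, rfl⟩
  simpa [mul_assoc] using Set.mul_mem_mul hy (ol_subset_orr_inv X hh u hu)

lemma ol_subset_inv_mul_inv (X : Set Q) : Ol X ⊆ inv (X * inv X) :=
  fun _ hh a ha _ hb => mul_mem_mul_inv (ol_subset_orr_mul_inv X hh a ha) hb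

lemma mem_orr_inv_of_mul_mem_ol {q : Q} (h : ∀ a ∈ X * inv X, a * q ∈ Ol X) :
    q ∈ Orr (inv X) :=
  fun u hu y hy y' hy' => by simpa [mul_assoc] using h _ (Set.mul_mem_mul hy hu) y' hy'

-- Unlike `IsMaximalOrder`, this passes to `Qᵐᵒᵖ` without transporting units and orders.
def IsEquivMaximal (H : Set Q) : Prop :=
  ∀ H' : Set Q, H ⊆ H' → (∀ a ∈ H', ∀ b ∈ H', a * b ∈ H') →
    ∀ u v : Q, IsUnit u → IsUnit v → (∀ s ∈ H', u * s * v ∈ H) → H' = H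

lemma IsMaximalOrder.isEquivMaximal {H : Set Q} (hH : IsMaximalOrder H) : IsEquivMaximal H := by
  obtain ⟨⟨h1, -, hright, hleft⟩, hmax⟩ := hH
  intro H' hsub hmul u v hu hv hsand
  refine hmax H' ⟨hsub h1, hmul, fun q => ?_, fun q => ?_⟩
    ⟨⟨1, 1, fun h hh => by simpa using hsub hh⟩, ⟨hu.unit, hv.unit, hsand⟩⟩ hsub
  · obtain ⟨a, ha, s, hs, rfl⟩ := hright q
    exact ⟨a, hsub ha, s, hsub hs, rfl⟩
  · obtain ⟨a, ha, s, hs, rfl⟩ := hleft q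
    exact ⟨a, hsub ha, s, hsub hs, rfl⟩

lemma IsEquivMaximal.image_op {H : Set Q} (hH : IsEquivMaximal H) :
    IsEquivMaximal (op '' H) := by
  intro H' hsub hmul u v hu hv hsand
  have h := hH (op ⁻¹' H') (fun h hh => hsub ⟨h, hh, rfl⟩)
    (fun a ha b hb => hmul _ hb _ ha) v.unop u.unop hv.unop hu.unop
    (fun s hs => op_injective.mem_set_image.1 (by simpa [mul_assoc] using hsand _ hs))
  rw [← h, Set.image_preimage_eq _ op_surjective]

lemma IsEquivMaximal.ol_eq {H : Set Q} (hH : IsEquivMaximal H) (hHX : H ⊆ Ol X) {a u v : Q}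
    (ha : IsUnit a) (haX : a ∈ X) (hu : IsUnit u) (hv : IsUnit v)
    (huv : ∀ y ∈ X, u * y * v ∈ H) : Ol X = H :=
  hH _ hHX (fun _ ha _ hb => mul_mem_ol ha hb) u (a * v) hu (ha.mul hv)
    fun s hs => by simpa [mul_assoc] using huv _ (hs a haX)

theorem inv_inv_mul_inv_eq_ol (hmax : IsEquivMaximal (Ol X)) {x c : Q} (hx : IsUnit x)
    (hxX : x ∈ X) (hc : IsUnit c) (hcX : c ∈ inv X) : inv (inv (X * inv X)) = Ol X := by
  have hol_mul_inv : Ol (X * inv X) = Ol X :=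
    hmax.ol_eq (ol_subset_ol_mul_inv X) (hx.mul hc) (Set.mul_mem_mul hxX hcX) isUnit_one
      isUnit_one fun a ha => by simpa using mul_inv_subset_ol X ha
  have hol_inv_inv : Ol (inv (inv X)) = Ol X :=
    hmax.ol_eq ((ol_subset_orr_inv X).trans (orr_inv_subset_ol_inv_inv X)) hx
      (subset_inv_inv X hxX) (hx.mul hc) ((hc.mul hx).mul hc) fun r hr => by
        simpa [mul_assoc] using mul_mem_ol_of_mem_inv hcX (hr c hcX c hcX x hxX x hxX)
  have hinv : inv (X * inv X) = Ol X := by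
    refine Set.Subset.antisymm (fun q hq => ?_) (ol_subset_inv_mul_inv X)
    rw [← hol_inv_inv]
    refine orr_inv_subset_ol_inv_inv X (mem_orr_inv_of_mul_mem_ol fun a ha => ?_)
    rw [← hol_mul_inv]
    exact mul_mem_ol_of_mem_inv hq ha
  rw [hinv, inv_eq_self one_mem_ol fun _ ha _ hb => mul_mem_ol ha hb]

lemma inv_image_op (X : Set Q) : inv (op '' X) = op '' inv X := by
  ext q
  induction q using MulOpposite.rec' with | _ q => ?_
  simp only [inv, op_injective.mem_set_image, Set.mem_ofPred_eq, Set.forall_mem_image,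
    ← op_mul, ← mul_assoc]
  exact ⟨fun h x hx y hy => h hy hx, fun h x hx y hy => h y hy x hx⟩

lemma ol_image_op (X : Set Q) : Ol (op '' X) = op '' Orr X := by
  ext q
  induction q using MulOpposite.rec' with | _ q => ?_
  simp only [Ol, Orr, op_injective.mem_set_image, Set.mem_ofPred_eq, Set.forall_mem_image,
    ← op_mul]

end QSemi

theorem stmt16_general {Q : Type*} [Monoid Q]
    (H : Set Q) (hH : IsMaximalOrder H) (I : Set Q) (hI : IsFracLeftIdeal H I) :
    QSemi.inv (QSemi.inv (I * QSemi.inv I)) = Ol I ∧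
    (IsMaximalOrder (Orr I) → QSemi.inv (QSemi.inv (QSemi.inv I * I)) = Orr I) := by
  obtain ⟨hHI, ⟨x, hxI, hx⟩, ⟨c, hc, hIc⟩⟩ := hI
  have hcI : c ∈ QSemi.inv I := fun y hy y' hy' => hHI _ (hIc y hy) y' hy'
  have hol : Ol I = H :=
    hH.isEquivMaximal.ol_eq hHI hx hxI isUnit_one hc fun y hy => by simpa using hIc y hy
  refine ⟨inv_inv_mul_inv_eq_ol (hol ▸ hH.isEquivMaximal) hx hxI hc hcI, fun hK => ?_⟩
  have h := inv_inv_mul_inv_eq_ol (X := MulOpposite.op '' I)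
    (by rw [ol_image_op]; exact hK.isEquivMaximal.image_op) hx.op (Set.mem_image_of_mem _ hxI)
    hc.op (by rw [inv_image_op]; exact Set.mem_image_of_mem _ hcI)
  rwa [inv_image_op, ← Set.image_op_mul, inv_image_op, inv_image_op, ol_image_op,
    MulOpposite.op_injective.image_injective.eq_iff] at h

/-- For a maximal order `H` in a quotient semigroup `Q` and a fractional left `H`-ideal `I`:
`(I·I⁻¹)_v = O_l(I)`, and if `O_r(I)` is also a maximal order then `(I⁻¹·I)_v = O_r(I)`;
in particular every divisorial fractional left `H`-ideal is `v`-invertible. -/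
theorem stmt16 {Q : Type*} [Monoid Q] (hQ : IsQuotientSemigroup Q)
    (H : Set Q) (hH : IsMaximalOrder H) (I : Set Q) (hI : IsFracLeftIdeal H I) :
    QSemi.inv (QSemi.inv (I * QSemi.inv I)) = Ol I ∧
    (IsMaximalOrder (Orr I) → QSemi.inv (QSemi.inv (QSemi.inv I * I)) = Orr I) :=
  stmt16_general H hH I hI
end

section
/- Let R be a maximal order (in the ring-theoretic sense) in a quotient ring Q, and I a divisorial fractional left R-ideal in the multiplicative-semigroup sense. Then I is additively closed (I − I ⊂ I) if and only if O_l(I) is a subring of Q, if and only if O_r(I) is a subring of Q. -/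
/-!
Since `(a - b) x = a x - b x`, subtraction-closedness passes from `I` to `O_l(I)` and `O_r(I)`.
Conversely, `I · I⁻¹ ⊆ O_l(I)` and `I⁻¹ · I ⊆ O_r(I)`, so subtraction-closedness of either order
passes to `I⁻¹` (e.g. `x (q - q') y = (x q - x q') y`), and from there to `(I⁻¹)⁻¹ = I`.
-/

namespace QSemi

variable {Q : Type*} [Ring Q]

def SubClosed (X : Set Q) : Prop := ∀ x ∈ X, ∀ y ∈ X, x - y ∈ X

theorem subClosed_subring (T : Subring Q) : SubClosed (T : Set Q) :=
  fun _ ha _ hb => sub_mem ha hb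

theorem exists_subring_coe_eq {S : Set Q} (one : (1 : Q) ∈ S)
    (mul : ∀ a ∈ S, ∀ b ∈ S, a * b ∈ S) (sub : SubClosed S) :
    ∃ T : Subring Q, (T : Set Q) = S := by
  have zero : (0 : Q) ∈ S := by simpa using sub 1 one 1 one
  have neg : ∀ a ∈ S, -a ∈ S := fun a ha => by simpa using sub 0 zero a ha
  exact ⟨{ carrier := S
           one_mem' := one
           mul_mem' := fun {a b} ha hb => mul a ha b hb
           zero_mem' := zero
           add_mem' := fun {a b} ha hb => by simpa using sub a ha (-b) (neg b hb)
           neg_mem' := neg _ }, rfl⟩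

theorem subClosed_inv {J : Set Q} (hJ : SubClosed J) : SubClosed (inv J) :=
  fun x hx y hy u hu v hv => by
    simpa [mul_sub, sub_mul] using hJ _ (hx u hu v hv) _ (hy u hu v hv)

variable {I : Set Q}

theorem one_mem_Ol : (1 : Q) ∈ Ol I := fun x hx => by simpa using hx

theorem one_mem_Orr : (1 : Q) ∈ Orr I := fun x hx => by simpa using hx

theorem mul_mem_Ol {a b : Q} (ha : a ∈ Ol I) (hb : b ∈ Ol I) : a * b ∈ Ol I :=
  fun x hx => by simpa [mul_assoc] using ha _ (hb x hx)

theorem mul_mem_Orr {a b : Q} (ha : a ∈ Orr I) (hb : b ∈ Orr I) : a * b ∈ Orr I :=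
  fun x hx => by simpa [mul_assoc] using hb _ (ha x hx)

theorem subClosed_Ol (hI : SubClosed I) : SubClosed (Ol I) :=
  fun a ha b hb x hx => by simpa [sub_mul] using hI _ (ha x hx) _ (hb x hx)

theorem subClosed_Orr (hI : SubClosed I) : SubClosed (Orr I) :=
  fun a ha b hb x hx => by simpa [mul_sub] using hI _ (ha x hx) _ (hb x hx)

theorem exists_subring_coe_eq_Ol (hI : SubClosed I) : ∃ S : Subring Q, (S : Set Q) = Ol I :=
  exists_subring_coe_eq one_mem_Ol (fun _ ha _ hb => mul_mem_Ol ha hb) (subClosed_Ol hI)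

theorem exists_subring_coe_eq_Orr (hI : SubClosed I) : ∃ S : Subring Q, (S : Set Q) = Orr I :=
  exists_subring_coe_eq one_mem_Orr (fun _ ha _ hb => mul_mem_Orr ha hb) (subClosed_Orr hI)

theorem mul_mem_Ol_of_mem_inv {x q : Q} (hx : x ∈ I) (hq : q ∈ inv I) : x * q ∈ Ol I :=
  fun y hy => hq x hx y hy

theorem mul_mem_Orr_of_mem_inv {q y : Q} (hq : q ∈ inv I) (hy : y ∈ I) : q * y ∈ Orr I :=
  fun x hx => by simpa [mul_assoc] using hq x hx y hy

theorem subClosed_inv_of_Ol (h : SubClosed (Ol I)) : SubClosed (inv I) :=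
  fun q hq q' hq' x hx y hy => by
    simpa [mul_sub] using
      h _ (mul_mem_Ol_of_mem_inv hx hq) _ (mul_mem_Ol_of_mem_inv hx hq') y hy

theorem subClosed_inv_of_Orr (h : SubClosed (Orr I)) : SubClosed (inv I) :=
  fun q hq q' hq' x hx y hy => by
    simpa [sub_mul, mul_assoc] using
      h _ (mul_mem_Orr_of_mem_inv hq hy) _ (mul_mem_Orr_of_mem_inv hq' hy) x hx

end QSemi

open QSemi

theorem stmt17_general {Q : Type*} [Ring Q]
    (I : Set Q)
    (hdiv : QSemi.inv (QSemi.inv I) = I) :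
    ((∀ x ∈ I, ∀ y ∈ I, x - y ∈ I) ↔ ∃ S : Subring Q, (S : Set Q) = Ol I) ∧
    ((∀ x ∈ I, ∀ y ∈ I, x - y ∈ I) ↔ ∃ S : Subring Q, (S : Set Q) = Orr I) := by
  refine ⟨⟨exists_subring_coe_eq_Ol, fun ⟨S, hS⟩ => ?_⟩,
    ⟨exists_subring_coe_eq_Orr, fun ⟨S, hS⟩ => ?_⟩⟩
  · exact hdiv ▸ subClosed_inv (subClosed_inv_of_Ol (hS ▸ subClosed_subring S))
  · exact hdiv ▸ subClosed_inv (subClosed_inv_of_Orr (hS ▸ subClosed_subring S))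

/-- Let `Q` be a quotient ring, `R ⊆ Q` a subring that is a maximal order in the
multiplicative quotient semigroup `(Q,·)`, and `I` a divisorial fractional left `R`-ideal in
the semigroup sense.  Then `I` is additively closed (`I − I ⊆ I`) iff `O_l(I)` is a subring
of `Q`, iff `O_r(I)` is a subring of `Q`. -/
theorem stmt17 {Q : Type*} [Ring Q]
    (hQ : ∀ q : Q, q ∈ nonZeroDivisors Q → IsUnit q)
    (R : Subring Q) (hR : IsMaximalOrder (R : Set Q))
    (I : Set Q) (hI : IsFracLeftIdeal (R : Set Q) I)
    (hdiv : QSemi.inv (QSemi.inv I) = I) :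
    ((∀ x ∈ I, ∀ y ∈ I, x - y ∈ I) ↔ ∃ S : Subring Q, (S : Set Q) = Ol I) ∧
    ((∀ x ∈ I, ∀ y ∈ I, x - y ∈ I) ↔ ∃ S : Subring Q, (S : Set Q) = Orr I) :=
  stmt17_general I hdiv
end
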